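/- arXiv:2601.19803 — 8 statements merged into one kernel-verified Lean document; each statement's English description precedes it below -/
import Mathlib

section
/- If {a,b,c} is a Diophantine triple with ab+1=r², ac+1=s², bc+1=t² (r,s,t positive integers), and d = a+b+c+2(abc+rst), then ad+1 = (at+rs)², bd+1 = (bs+rt)², and cd+1 = (cr+st)². -/
theorem stmt_1 (a b c d r s t : ℕ) (ha : 0 < a) (hb : 0 < b) (hc : 0 < c)
    (hr : 0 < r) (hs : 0 < s) (ht : 0 < t)
    (hab : a * b + 1 = r ^ 2) (hac : a * c + 1 = s ^ 2) (hbc : b * c + 1 = t ^ 2)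
    (hd : d = a + b + c + 2 * (a * b * c + r * s * t)) :
    a * d + 1 = (a * t + r * s) ^ 2 ∧ b * d + 1 = (b * s + r * t) ^ 2 ∧
      c * d + 1 = (c * r + s * t) ^ 2 := by
  subst hd
  zify at hab hac hbc ⊢
  refine ⟨?_, ?_, ?_⟩
  · linear_combination (a : ℤ) ^ 2 * hbc + ((a : ℤ) * c + 1) * hab + (r : ℤ) ^ 2 * hac
  · linear_combination (b : ℤ) ^ 2 * hac + ((b : ℤ) * c + 1) * hab + (r : ℤ) ^ 2 * hbc
  · linear_combination (c : ℤ) ^ 2 * hab + ((c : ℤ) * a + 1) * hbc + (t : ℤ) ^ 2 * hac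
end

section
/- Define sequences t₀=1, t₁=b+r, t_{ν+2}=2r t_{ν+1} − t_ν and s₀=1, s₁=r+2, s_{ν+2}=2r s_{ν+1} − s_ν, where b=2k(k+1), r=2k+1, k a positive integer. Then for all ν ≥ 0, 2t_ν² − b s_ν² = 2 − b. -/
theorem stmt_5 (k : ℕ) (hk : 0 < k) (b r : ℤ)
    (hb : b = 2 * k * (k + 1)) (hr : r = 2 * k + 1)
    (t s : ℕ → ℤ)
    (ht0 : t 0 = 1) (ht1 : t 1 = b + r)
    (htrec : ∀ ν, t (ν + 2) = 2 * r * t (ν + 1) - t ν)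
    (hs0 : s 0 = 1) (hs1 : s 1 = r + 2)
    (hsrec : ∀ ν, s (ν + 2) = 2 * r * s (ν + 1) - s ν) :
    ∀ ν, 2 * (t ν) ^ 2 - b * (s ν) ^ 2 = 2 - b := by
  have hr2 : r ^ 2 = 2 * b + 1 := by subst hb hr; ring
  have key : ∀ ν, (2 * (t ν) ^ 2 - b * (s ν) ^ 2 = 2 - b) ∧
      (2 * (t (ν+1)) ^ 2 - b * (s (ν+1)) ^ 2 = 2 - b) ∧
      (2 * t (ν+1) * t ν - b * (s (ν+1)) * s ν = r * (2 - b)) := by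
    intro ν
    induction ν with
    | zero =>
      simp only [Nat.zero_add, ht0, ht1, hs0, hs1]
      refine ⟨?_, ?_, ?_⟩ <;> nlinarith [hr2]
    | succ n ih =>
      obtain ⟨h0, h1, hc⟩ := ih
      refine ⟨h1, ?_, ?_⟩
      · rw [htrec, hsrec]; nlinarith [h0, h1, hc, hr2]
      · rw [htrec, hsrec]; nlinarith [h0, h1, hc, hr2]
  exact fun ν => (key ν).1
end

section
/- Let b=2k(k+1), r=2k+1 for a positive integer k, and c₂⁺ = 4r(r+2)(b+r). Then 2c₂⁺+1 and bc₂⁺+1 are perfect squares, so {2,b,c₂⁺} is a Diophantine triple. -/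
theorem stmt_7 (k b r c : ℕ) (hk : 0 < k)
    (hb : b = 2 * k * (k + 1)) (hr : r = 2 * k + 1)
    (hc : c = 4 * r * (r + 2) * (b + r)) :
    (∃ u : ℕ, 2 * c + 1 = u ^ 2) ∧ (∃ v : ℕ, b * c + 1 = v ^ 2) := by
  subst hb hr hc
  exact ⟨⟨8 * k ^ 2 + 16 * k + 5, by ring⟩,
    ⟨8 * k ^ 3 + 20 * k ^ 2 + 12 * k + 1, by ring⟩⟩
end

section
/- Let (T_ν) satisfy T₀=1, T₁=r, T_{ν+2}=2rT_{ν+1}−T_ν with r ≥ 2, and let (p_l) satisfy p_{l+2}=2rp_{l+1}−p_l. Then for every ν ≥ 1 and m ≥ 0, p_{mν+2ν} = 2T_ν p_{mν+ν} − p_{mν}. -/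
theorem stmt_12 (r : ℕ) (hr : 2 ≤ r) (T : ℕ → ℤ) (p : ℕ → ℤ)
    (hT0 : T 0 = 1) (hT1 : T 1 = r)
    (hTrec : ∀ ν, T (ν + 2) = 2 * r * T (ν + 1) - T ν)
    (hprec : ∀ l, p (l + 2) = 2 * r * p (l + 1) - p l) :
    ∀ ν, 1 ≤ ν → ∀ m : ℕ,
      p (m * ν + 2 * ν) = 2 * T ν * p (m * ν + ν) - p (m * ν) := by
  have key : ∀ ν l, p (l + 2 * ν) = 2 * T ν * p (l + ν) - p l := by
    intro ν
    induction ν using Nat.strong_induction_on with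
    | _ ν ih =>
      match ν with
      | 0 =>
        intro l
        simp [hT0]
        ring
      | 1 =>
        intro l
        simpa [hT1] using hprec l
      | (n+2) =>
        intro l
        have h1 := ih (n+1) (by omega) l
        have h2 := ih (n+1) (by omega) (l+2)
        have h3 := ih n (by omega) (l+2)
        have h4 := hprec (l+n+1)
        have h5 := hTrec n
        have e1 : l + 2*(n+1) = l + 2*n+2 := by ring
        have e2 : l + (n+1) = l+n+1 := by ring
        have e3 : l + 2 + 2*(n+1) = l+2*n+4 := by ring
        have e4 : l + 2 + (n+1) = l+n+3 := by ring
        have e5 : l + 2 + 2*n = l+2*n+2 := by ring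
        have e6 : l + 2 + n = l+n+2 := by ring
        have e7 : l+n+1+2 = l+n+3 := by ring
        have e8 : l+n+1+1 = l+n+2 := by ring
        have e9 : l + 2*(n+2) = l+2*n+4 := by ring
        have e10 : l + (n+2) = l+n+2 := by ring
        rw [e1, e2] at h1
        rw [e3, e4] at h2
        rw [e5, e6] at h3
        rw [e7, e8] at h4
        rw [e9, e10]
        linear_combination h2 + 2*T (n+1)*h4 + h1 - h3 - 2*p (l+n+2)*h5
  exact fun ν _ m => key ν (m * ν)
end

section
/- Let b = 2k(k+1), r = 2k+1 with b > 4000, and suppose y₂ is an integer with 1 ≤ |y₂| < b/2 and y₂ ≡ r (mod b) where 2y₂² − b x₂² = 2 − b for some integer x₂. Then y₂ = r and x₂² = 5, which is impossible; hence no such y₂ exists. -/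
theorem stmt_15 (k : ℕ) (b r : ℤ)
    (hb : b = 2 * k * (k + 1)) (hr : r = 2 * k + 1) (hb4000 : 4000 < b)
    (y₂ x₂ : ℤ) (hy1 : 1 ≤ |y₂|) (hy2 : 2 * |y₂| < b)
    (hcong : y₂ ≡ r [ZMOD b]) (hpell : 2 * y₂ ^ 2 - b * x₂ ^ 2 = 2 - b) :
    False := by
  have hk : (45 : ℤ) ≤ (k : ℤ) := by nlinarith [Int.natCast_nonneg k]
  have hdvd : b ∣ r - y₂ := hcong.dvd
  have hrb : 2 * r < b := by nlinarith
  have hrpos : 0 < r := by omega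
  have habs : |y₂| < b := by omega
  -- |r - y₂| < b, so r - y₂ = 0
  have hcb : |r - y₂| < b := by
    rcases abs_cases y₂ with ⟨h1, h2⟩ | ⟨h1, h2⟩ <;>
      rcases abs_cases (r - y₂) with ⟨h3, h4⟩ | ⟨h3, h4⟩ <;> omega
  have hy : y₂ = r := by
    have := Int.eq_zero_of_abs_lt_dvd hdvd hcb
    omega
  subst hy
  have hx5 : b * x₂ ^ 2 = b * 5 := by nlinarith
  have hx : x₂ ^ 2 = 5 := by
    have := mul_left_cancel₀ (a := b) (by omega) hx5
    omega
  have : |x₂| ≤ 2 ∨ 3 ≤ |x₂| := by omega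
  rcases this with h | h
  · nlinarith [sq_abs x₂, mul_le_mul h h (abs_nonneg x₂) (by norm_num : (0:ℤ) ≤ 2)]
  · nlinarith [sq_abs x₂, mul_le_mul h h (by norm_num : (0:ℤ) ≤ 3) (abs_nonneg x₂)]
end

section
/- Let b=2k(k+1), r=2k+1, k ≥ 1, and s=r+2, c=(s²−1)/2=2+b+2r. Define V₀=1, V₁=s−2, V_{m+2}=2sV_{m+1}−V_m and p₀=1, p₁=r+2, p_{l+2}=2rp_{l+1}−p_l. Then V₂ = p₂, and the common value x = 2s(s−2)−1 satisfies: d = (x²−1)/2 gives the regular Diophantine quadruple {2, b, c, d} with d = 4(3+20k+42k²+32k³+8k⁴). -/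
theorem stmt_16 (k : ℕ) (hk : 0 < k) (b r s c : ℕ)
    (hb : b = 2 * k * (k + 1)) (hr : r = 2 * k + 1) (hs : s = r + 2)
    (hc : c = 2 + b + 2 * r)
    (V p : ℕ → ℕ)
    (hV0 : V 0 = 1) (hV1 : V 1 = s - 2)
    (hVrec : ∀ m, V (m + 2) = 2 * s * V (m + 1) - V m)
    (hp0 : p 0 = 1) (hp1 : p 1 = r + 2)
    (hprec : ∀ l, p (l + 2) = 2 * r * p (l + 1) - p l) :
    V 2 = p 2 ∧ V 2 = 2 * s * (s - 2) - 1 ∧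
    ∀ x d : ℕ, x = 2 * s * (s - 2) - 1 → d = (x ^ 2 - 1) / 2 →
      d = 4 * (3 + 20 * k + 42 * k ^ 2 + 32 * k ^ 3 + 8 * k ^ 4) ∧
      d = 2 + b + c + 2 * (2 * b * c + r * s * (b + r)) ∧
      2 * d + 1 = x ^ 2 ∧
      (∃ u : ℕ, b * d + 1 = u ^ 2) ∧ (∃ v : ℕ, c * d + 1 = v ^ 2) := by
  subst hb hr hs hc
  have hsub : (2 * k + 1 + 2) - 2 = 2 * k + 1 := by omega
  have hxval : 2 * (2 * k + 1 + 2) * ((2 * k + 1 + 2) - 2) - 1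
      = 8 * k ^ 2 + 16 * k + 5 := by
    rw [hsub]
    have h3 : 2 * (2 * k + 1 + 2) * (2 * k + 1) = (8 * k ^ 2 + 16 * k + 5) + 1 := by
      ring
    rw [h3, Nat.add_sub_cancel]
  refine ⟨?_, ?_, ?_⟩
  · rw [hVrec 0, hprec 0, hV1, hV0, hp1, hp0, hsub]
    congr 1
    ring
  · rw [hVrec 0, hV1, hV0]
  · intro x d hx hd
    rw [hxval] at hx
    subst hx
    have hd' : d = 4 * (3 + 20 * k + 42 * k ^ 2 + 32 * k ^ 3 + 8 * k ^ 4) := by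
      have hx2 : (8 * k ^ 2 + 16 * k + 5) ^ 2
          = 2 * (4 * (3 + 20 * k + 42 * k ^ 2 + 32 * k ^ 3 + 8 * k ^ 4)) + 1 := by
        ring
      rw [hd, hx2]
      generalize 4 * (3 + 20 * k + 42 * k ^ 2 + 32 * k ^ 3 + 8 * k ^ 4) = D
      omega
    subst hd
    rw [hd']
    refine ⟨rfl, by ring, by ring, ⟨8 * k ^ 3 + 20 * k ^ 2 + 12 * k + 1, by ring⟩,
      ⟨8 * k ^ 3 + 28 * k ^ 2 + 28 * k + 7, by ring⟩⟩
end

section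
/- Let r ≥ 3 and s = 2r²+4r−1. Define V₀=1, V₁=s−2 (or V₁=s+2), V_{m+2}=2sV_{m+1}−V_m, and p₀=1, p₁=r+2, p_{l+2}=2rp_{l+1}−p_l. If p_{2m−1} < V_{m−1} for some m ≥ 2, then p_{2m+1} < V_m. -/
theorem stmt_17 (r : ℤ) (hr : 3 ≤ r) (s : ℤ) (hs : s = 2 * r ^ 2 + 4 * r - 1)
    (V p : ℕ → ℤ)
    (hV0 : V 0 = 1) (hV1 : V 1 = s - 2 ∨ V 1 = s + 2)
    (hVrec : ∀ m, V (m + 2) = 2 * s * V (m + 1) - V m)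
    (hp0 : p 0 = 1) (hp1 : p 1 = r + 2)
    (hprec : ∀ l, p (l + 2) = 2 * r * p (l + 1) - p l) :
    ∀ m, 2 ≤ m → p (2 * m - 1) < V (m - 1) → p (2 * m + 1) < V m := by
  have hp : ∀ l, 1 ≤ p l ∧ p l ≤ p (l + 1) := by
    intro l
    induction l with
    | zero => exact ⟨by rw [hp0], by rw [hp0, hp1]; linarith⟩
    | succ n ih =>
      obtain ⟨h1, h2⟩ := ih
      have h1' : 1 ≤ p (n + 1) := le_trans h1 h2
      refine ⟨h1', ?_⟩
      have := hprec n
      nlinarith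
  have hV : ∀ l, 1 ≤ V l ∧ V l ≤ V (l + 1) := by
    intro l
    induction l with
    | zero =>
      rcases hV1 with h | h <;>
        exact ⟨by rw [hV0], by rw [hV0, h, hs]; nlinarith⟩
    | succ n ih =>
      obtain ⟨h1, h2⟩ := ih
      have h1' : 1 ≤ V (n + 1) := le_trans h1 h2
      refine ⟨h1', ?_⟩
      have := hVrec n
      nlinarith
  intro m hm hlt
  obtain ⟨k, rfl⟩ : ∃ k, m = k + 2 := ⟨m - 2, by omega⟩
  have e1 : 2 * (k + 2) - 1 = 2 * k + 3 := by omega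
  have e2 : 2 * (k + 2) + 1 = 2 * k + 5 := by omega
  have e3 : (k + 2) - 1 = k + 1 := by omega
  rw [e1, e3] at hlt
  rw [e2]
  have r1 := hprec (2 * k + 1)
  have r2 := hprec (2 * k + 2)
  have r3 := hprec (2 * k + 3)
  norm_num [show 2 * k + 1 + 2 = 2 * k + 3 by ring, show 2 * k + 2 + 2 = 2 * k + 4 by ring,
    show 2 * k + 3 + 2 = 2 * k + 5 by ring, show 2 * k + 1 + 1 = 2 * k + 2 by ring,
    show 2 * k + 2 + 1 = 2 * k + 3 by ring, show 2 * k + 3 + 1 = 2 * k + 4 by ring] at r1 r2 r3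
  have key : p (2 * k + 5) = (4 * r ^ 2 - 2) * p (2 * k + 3) - p (2 * k + 1) := by
    rw [r3, r2, r1]; ring
  have hVk := hVrec k
  have hV1' := (hV (k + 1)).1
  have hVm := (hV k).2
  have hpk := (hp (2 * k + 1)).1
  have A : (4 * r ^ 2 - 2) * p (2 * k + 3) ≤ (4 * r ^ 2 - 2) * (V (k + 1) - 1) :=
    mul_le_mul_of_nonneg_left (by linarith) (by nlinarith)
  have B : (2 * s - 1) * V (k + 1) ≤ V (k + 2) := by nlinarith
  have C : (8 * r - 1) * 1 ≤ (8 * r - 1) * V (k + 1) :=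
    mul_le_mul_of_nonneg_left hV1' (by linarith)
  nlinarith [A, B, C, key]
end

section
/- Let k ≥ 1000, b = 2k(k+1), r = 2k+1, α = r + √(2b). If Δ ≥ 1 is an integer satisfying 0.69·Δ·√b·log α < 67578.15·(Δ+1+3+2·3)·log α + 1351.57, then √b < 1077590.56 and hence k ≤ 761970. -/
theorem stmt_19 (k : ℕ) (hk : 1000 ≤ k) (b r : ℕ)
    (hb : b = 2 * k * (k + 1)) (hr : r = 2 * k + 1)
    (α : ℝ) (hα : α = (r : ℝ) + Real.sqrt (2 * b))
    (Δ : ℕ) (hΔ : 1 ≤ Δ)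
    (h : 0.69 * (Δ : ℝ) * Real.sqrt b * Real.log α <
      67578.15 * ((Δ : ℝ) + 1 + 3 + 2 * 3) * Real.log α + 1351.57) :
    Real.sqrt b < 1077590.56 ∧ k ≤ 761970 := by
  have hkR : (1000 : ℝ) ≤ (k : ℝ) := by exact_mod_cast hk
  have hbR : (b : ℝ) = 2 * (k : ℝ) * ((k : ℝ) + 1) := by rw [hb]; push_cast; ring
  have hs0 : 0 ≤ Real.sqrt b := Real.sqrt_nonneg _
  -- α ≥ 2048
  have h2b : (2000 : ℝ) ^ 2 ≤ 2 * (b : ℝ) := by nlinarith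
  have hsq2b : (2000 : ℝ) ≤ Real.sqrt (2 * b) := by
    have := Real.sqrt_le_sqrt h2b
    rwa [Real.sqrt_sq (by norm_num)] at this
  have hrR : (2001 : ℝ) ≤ (r : ℝ) := by
    rw [hr]; push_cast; linarith
  have hα2 : (2048 : ℝ) ≤ α := by rw [hα]; linarith
  have hL : (7.62 : ℝ) < Real.log α := by
    have h1 : Real.log 2048 ≤ Real.log α :=
      Real.log_le_log (by norm_num) hα2
    have h2 : Real.log 2048 = 11 * Real.log 2 := by
      rw [show (2048 : ℝ) = 2 ^ (11 : ℕ) by norm_num, Real.log_pow]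
      push_cast; ring
    nlinarith [Real.log_two_gt_d9]
  have hD : (1 : ℝ) ≤ (Δ : ℝ) := by exact_mod_cast hΔ
  set s := Real.sqrt b with hsdef
  set L := Real.log α with hLdef
  set D := (Δ : ℝ) with hDdef
  have hDL : (7.62 : ℝ) ≤ D * L := by nlinarith
  have h' : 0.69 * D * s * L < 743359.65 * (D * L) + 1351.57 := by
    have hup : 67578.15 * (D + 1 + 3 + 2 * 3) * L ≤ 743359.65 * (D * L) := by
      nlinarith
    linarith
  have hs : s < 1077590 := by
    by_contra hns
    push_neg at hns
    have key : (177.45 : ℝ) * 7.62 ≤ (0.69 * s - 743359.65) * (D * L) :=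
      mul_le_mul (by linarith) hDL (by norm_num) (by linarith)
    nlinarith
  constructor
  · linarith
  · by_contra hk2
    push_neg at hk2
    have hk2R : (761971 : ℝ) ≤ (k : ℝ) := by exact_mod_cast hk2
    have hkk : (761971 : ℝ) * 761971 ≤ (k : ℝ) * (k : ℝ) :=
      mul_le_mul hk2R hk2R (by norm_num) (by linarith)
    have hble : (1077590 : ℝ) ^ 2 ≤ (b : ℝ) := by rw [hbR]; linarith [hkk]
    have := Real.sqrt_le_sqrt hble
    rw [Real.sqrt_sq (by norm_num)] at this
    linarith
end
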